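/- Let Q ⊆ ℝᵖ be compact convex, ρ : ℝᵖ → ℝ continuous and strongly convex on Q with parameter 1 (with respect to a norm ‖·‖_† on ℝᵖ), and A a p×q matrix. For τ > 0 define γ(z;τ) := max_{w∈Q} (⟨Az, w⟩ − τρ(w)), and let ŵ(z) be the unique maximizer. Then z ↦ γ(z;τ) is differentiable with gradient ∇γ(z;τ) = Aᵀŵ(z), and this gradient map is Lipschitz continuous with constant ‖A‖²_{#,†}/τ, where ‖A‖_{#,†} := max{⟨Au, v⟩ : ‖u‖_# = 1, ‖v‖_† = 1}. -/

import Mathlib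

/-!
The objective `Φ_z(v) = ⟨Az, v⟩ - τρ(v)` is `τ`-strongly concave, so at its maximizer it drops at
least quadratically: `Φ_z(ŵ(z)) - Φ_z(v) ≥ (τ/2)‖v - ŵ(z)‖²_†`. Adding this for `z₁` and `z₂`
gives `τ‖ŵ(z₁) - ŵ(z₂)‖²_† ≤ ⟨A(z₁ - z₂), ŵ(z₁) - ŵ(z₂)⟩ ≤ ‖A‖ ‖z₁ - z₂‖_# ‖ŵ(z₁) - ŵ(z₂)‖_†`,
so `ŵ` is `‖A‖/τ`-Lipschitz. As a maximum of functions affine in `z`, `γ` satisfies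
`⟨Ah, ŵ(z)⟩ ≤ γ(z + h) - γ(z) ≤ ⟨Ah, ŵ(z + h)⟩`, and the gap is `O(‖h‖²)` by the Lipschitz
bound, so `∇γ(z) = Aᵀŵ(z)`; pairing `Aᵀ(ŵ(z₁) - ŵ(z₂))` with unit vectors then gives the
Lipschitz constant `‖A‖²/τ` of the gradient.
-/

open Matrix Filter Topology Asymptotics

theorem Seminorm.exists_le_mul_norm {E : Type*} [NormedAddCommGroup E] [NormedSpace ℝ E]
    [FiniteDimensional ℝ E] (p : Seminorm ℝ E) : ∃ C, 0 < C ∧ ∀ x, p x ≤ C * ‖x‖ :=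
  p.bound_of_continuous_normedSpace p.convexOn.locallyLipschitz.continuous

theorem hasFDerivAt_of_abs_sub_sub_le {E : Type*} [NormedAddCommGroup E] [NormedSpace ℝ E]
    {f : E → ℝ} {L : E →L[ℝ] ℝ} {z : E} (K : ℝ)
    (hf : ∀ h, |f (z + h) - f z - L h| ≤ K * ‖h‖ ^ 2) : HasFDerivAt f L z := by
  rw [hasFDerivAt_iff_isLittleO_nhds_zero]
  refine IsBigO.trans_isLittleO (g := fun h => ‖h‖ ^ 2) ?_ (isLittleO_norm_pow_id one_lt_two)
  exact .of_bound K (.of_forall fun h => by simpa using hf h)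

section Pairing

variable {E F : Type*} [AddCommGroup E] [Module ℝ E] [AddCommGroup F] [Module ℝ F]
  (B : E →ₗ[ℝ] F →ₗ[ℝ] ℝ) {N₁ : Seminorm ℝ E} {N₂ : Seminorm ℝ F} {M : ℝ}

theorem LinearMap.nonneg_of_forall_seminorm_eq_one_le {u : E} {v : F} (hu : N₁ u = 1)
    (hv : N₂ v = 1) (hM : ∀ u v, N₁ u = 1 → N₂ v = 1 → B u v ≤ M) : 0 ≤ M := by
  have h₁ := hM u v hu hv
  have h₂ := hM (-u) v (by rwa [map_neg_eq_map]) hv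
  simp only [map_neg, LinearMap.neg_apply] at h₂
  linarith

theorem LinearMap.le_mul_seminorm_mul_seminorm (h₁ : ∀ x, N₁ x = 0 → x = 0)
    (h₂ : ∀ y, N₂ y = 0 → y = 0) (hM : ∀ u v, N₁ u = 1 → N₂ v = 1 → B u v ≤ M) (x : E) (y : F) :
    B x y ≤ M * N₁ x * N₂ y := by
  rcases eq_or_ne x 0 with rfl | hx
  · simp
  rcases eq_or_ne y 0 with rfl | hy
  · simp
  have hx₀ : 0 < N₁ x := (apply_nonneg N₁ x).lt_of_ne' (mt (h₁ x) hx)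
  have hy₀ : 0 < N₂ y := (apply_nonneg N₂ y).lt_of_ne' (mt (h₂ y) hy)
  have hunit := hM ((N₁ x)⁻¹ • x) ((N₂ y)⁻¹ • y)
    (by rw [map_smul_eq_mul, Real.norm_eq_abs, abs_of_pos (inv_pos.2 hx₀), inv_mul_cancel₀ hx₀.ne'])
    (by rw [map_smul_eq_mul, Real.norm_eq_abs, abs_of_pos (inv_pos.2 hy₀), inv_mul_cancel₀ hy₀.ne'])
  simp only [map_smul, LinearMap.smul_apply, smul_eq_mul] at hunit
  rw [inv_mul_le_iff₀ hy₀, inv_mul_le_iff₀ hx₀] at hunit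
  exact hunit.trans_eq (by ring)

end Pairing

section StrongConvexity

variable {F : Type*} [AddCommGroup F] [Module ℝ F]

/-- Like Mathlib's `StrongConvexOn`, but with the modulus measured by an arbitrary `N` instead of
the ambient norm. -/
def StrongConvexOnWrt (N : F → ℝ) (μ : ℝ) (s : Set F) (f : F → ℝ) : Prop :=
  ∀ x ∈ s, ∀ y ∈ s, ∀ t : ℝ, 0 ≤ t → t ≤ 1 →
    f (t • x + (1 - t) • y) ≤ t * f x + (1 - t) * f y - μ / 2 * (t * (1 - t)) * N (x - y) ^ 2

namespace StrongConvexOnWrt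

variable {N : F → ℝ} {μ : ℝ} {s : Set F} {f : F → ℝ}

theorem const_mul (hf : StrongConvexOnWrt N μ s f) {c : ℝ} (hc : 0 ≤ c) :
    StrongConvexOnWrt N (c * μ) s (fun x => c * f x) := by
  intro x hx y hy t ht₀ ht₁
  calc c * f (t • x + (1 - t) • y)
      ≤ c * (t * f x + (1 - t) * f y - μ / 2 * (t * (1 - t)) * N (x - y) ^ 2) :=
        mul_le_mul_of_nonneg_left (hf x hx y hy t ht₀ ht₁) hc
    _ = _ := by ring

theorem sub_linearMap (hf : StrongConvexOnWrt N μ s f) (ℓ : F →ₗ[ℝ] ℝ) :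
    StrongConvexOnWrt N μ s (fun x => f x - ℓ x) := by
  intro x hx y hy t ht₀ ht₁
  have := hf x hx y hy t ht₀ ht₁
  simp only [map_add, map_smul, smul_eq_mul]
  linarith

theorem add_sq_le_of_isMinOn (hf : StrongConvexOnWrt N μ s f) (hs : Convex ℝ s) {x y : F}
    (hx : x ∈ s) (hy : y ∈ s) (hmin : IsMinOn f s x) :
    f x + μ / 2 * N (y - x) ^ 2 ≤ f y := by
  set c := μ / 2 * N (y - x) ^ 2
  -- Compare `x` with the points `t • y + (1 - t) • x` of the segment and let `t → 0⁺`.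
  have hseg : ∀ t ∈ Set.Ioc (0 : ℝ) 1, f x + c * (1 - t) ≤ f y := by
    rintro t ⟨ht₀, ht₁⟩
    have hmem : t • y + (1 - t) • x ∈ s := hs hy hx ht₀.le (by linarith) (by ring)
    have hle := (hmin hmem).trans (hf y hy x hx t ht₀.le ht₁)
    have : t * (f x + c * (1 - t)) ≤ t * f y := by simp only [c]; linarith
    exact le_of_mul_le_mul_left this ht₀
  have hlim : Tendsto (fun t => f x + c * (1 - t)) (𝓝[>] 0) (𝓝 (f x + c)) := by
    have hcont : Continuous fun t : ℝ => f x + c * (1 - t) := by fun_prop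
    simpa using (hcont.tendsto 0).mono_left nhdsWithin_le_nhds
  refine le_of_tendsto hlim ?_
  filter_upwards [Ioc_mem_nhdsGT zero_lt_one] with t ht using hseg t ht

end StrongConvexOnWrt

namespace StrongConvexOnWrt

variable {E : Type*} [AddCommGroup E] [Module ℝ E] {N : Seminorm ℝ F} {μ : ℝ} {s : Set F}
  {f : F → ℝ}

theorem mul_sq_le_of_isMinOn_sub (hf : StrongConvexOnWrt N μ s f) (hs : Convex ℝ s)
    {ℓ₁ ℓ₂ : F →ₗ[ℝ] ℝ} {x₁ x₂ : F} (hx₁ : x₁ ∈ s) (hx₂ : x₂ ∈ s)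
    (h₁ : IsMinOn (fun v => f v - ℓ₁ v) s x₁) (h₂ : IsMinOn (fun v => f v - ℓ₂ v) s x₂) :
    μ * N (x₁ - x₂) ^ 2 ≤ (ℓ₁ - ℓ₂) (x₁ - x₂) := by
  have e₁ := (hf.sub_linearMap ℓ₁).add_sq_le_of_isMinOn hs hx₁ hx₂ h₁
  have e₂ := (hf.sub_linearMap ℓ₂).add_sq_le_of_isMinOn hs hx₂ hx₁ h₂
  rw [map_sub_rev] at e₁
  simp only [LinearMap.sub_apply, map_sub]
  linarith

theorem argmin_sub_le {M : ℝ} {B : E →ₗ[ℝ] F →ₗ[ℝ] ℝ} {N' : Seminorm ℝ E} {w : E → F}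
    (hf : StrongConvexOnWrt N μ s f) (hs : Convex ℝ s) (hμ : 0 < μ) (hM : 0 ≤ M)
    (hB : ∀ x y, B x y ≤ M * N' x * N y) (hws : ∀ z, w z ∈ s)
    (hw : ∀ z, IsMinOn (fun v => f v - B z v) s (w z)) (z₁ z₂ : E) :
    N (w z₁ - w z₂) ≤ M / μ * N' (z₁ - z₂) := by
  have key := hf.mul_sq_le_of_isMinOn_sub hs (hws z₁) (hws z₂) (hw z₁) (hw z₂)
  rw [← map_sub] at key
  replace key := key.trans (hB _ _)
  rw [div_mul_eq_mul_div, le_div_iff₀ hμ]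
  rcases (apply_nonneg N (w z₁ - w z₂)).eq_or_lt with h₀ | hpos
  · rw [← h₀, zero_mul]
    exact mul_nonneg hM (apply_nonneg _ _)
  · exact le_of_mul_le_mul_right (by linarith) hpos

end StrongConvexOnWrt

end StrongConvexity

section Envelope

variable {E F : Type*} [AddCommGroup F] [Module ℝ F] {s : Set F} {f : F → ℝ}

theorem envelope_add_le [AddCommGroup E] [Module ℝ E] {B : E →ₗ[ℝ] F →ₗ[ℝ] ℝ} {w : E → F}
    {γ : E → ℝ} (hws : ∀ z, w z ∈ s)
    (hw : ∀ z, IsMinOn (fun v => f v - B z v) s (w z)) (hγ : ∀ z, γ z = B z (w z) - f (w z))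
    (z z' : E) : γ z + B (z' - z) (w z) ≤ γ z' := by
  have := hw z' (hws z)
  simp only [Set.mem_ofPred_eq] at this
  rw [hγ, hγ, map_sub, LinearMap.sub_apply]
  linarith

theorem hasFDerivAt_envelope [NormedAddCommGroup E] [NormedSpace ℝ E] [FiniteDimensional ℝ E]
    {B : E →ₗ[ℝ] F →ₗ[ℝ] ℝ} {w : E → F} {γ : E → ℝ} {N : Seminorm ℝ F} {N' : Seminorm ℝ E}
    {M L : ℝ} (hM : 0 ≤ M) (hL : 0 ≤ L) (hB : ∀ x y, B x y ≤ M * N' x * N y)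
    (hws : ∀ z, w z ∈ s) (hw : ∀ z, IsMinOn (fun v => f v - B z v) s (w z))
    (hlip : ∀ z₁ z₂, N (w z₁ - w z₂) ≤ L * N' (z₁ - z₂))
    (hγ : ∀ z, γ z = B z (w z) - f (w z)) (z : E) :
    HasFDerivAt γ (LinearMap.toContinuousLinearMap (B.flip (w z))) z := by
  obtain ⟨C, -, hC⟩ := N'.exists_le_mul_norm
  refine hasFDerivAt_of_abs_sub_sub_le (M * L * C ^ 2) fun h => ?_
  have lower := envelope_add_le hws hw hγ z (z + h)
  have upper := envelope_add_le hws hw hγ (z + h) z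
  simp only [add_sub_cancel_left, sub_add_cancel_left, map_neg, LinearMap.neg_apply] at lower upper
  have hh := apply_nonneg N' h
  have hgap : B h (w (z + h)) - B h (w z) ≤ M * L * C ^ 2 * ‖h‖ ^ 2 := calc
    _ = B h (w (z + h) - w z) := (map_sub _ _ _).symm
    _ ≤ M * N' h * N (w (z + h) - w z) := hB _ _
    _ ≤ M * N' h * (L * N' h) :=
        mul_le_mul_of_nonneg_left (by simpa using hlip (z + h) z) (mul_nonneg hM hh)
    _ = M * L * N' h ^ 2 := by ring
    _ ≤ M * L * (C * ‖h‖) ^ 2 :=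
        mul_le_mul_of_nonneg_left (pow_le_pow_left₀ hh (hC h) 2) (mul_nonneg hM hL)
    _ = M * L * C ^ 2 * ‖h‖ ^ 2 := by ring
  rw [LinearMap.coe_toContinuousLinearMap', LinearMap.flip_apply, abs_le]
  constructor <;> linarith

end Envelope

theorem Matrix.transpose_mulVec_dotProduct {m n R : Type*} [Fintype m] [Fintype n] [CommSemiring R]
    (A : Matrix m n R) (v : m → R) (u : n → R) : Aᵀ *ᵥ v ⬝ᵥ u = A *ᵥ u ⬝ᵥ v := by
  rw [mulVec_transpose, ← dotProduct_mulVec, dotProduct_comm]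

theorem stmt3_general (p q : ℕ)
    -- a norm `np` on ℝᵖ and a norm `nq` on ℝ^q
    (np : (Fin p → ℝ) → ℝ)
    (hnp_add : ∀ x y, np (x + y) ≤ np x + np y)
    (hnp_smul : ∀ (c : ℝ) x, np (c • x) = |c| * np x)
    (hnp_eq : ∀ x, np x = 0 ↔ x = 0)
    (nq : (Fin q → ℝ) → ℝ)
    (hnq_add : ∀ x y, nq (x + y) ≤ nq x + nq y)
    (hnq_smul : ∀ (c : ℝ) x, nq (c • x) = |c| * nq x)
    (hnq_eq : ∀ x, nq x = 0 ↔ x = 0)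
    -- the dual norm of `nq`
    (dq : (Fin q → ℝ) → ℝ)
    (hdq : ∀ s, dq s = sSup ((fun u => ∑ i, s i * u i) '' {u | nq u = 1}))
    -- the set Q: compact and convex
    (Q : Set (Fin p → ℝ)) (hQconv : Convex ℝ Q)
    -- the prox function: continuous, 1-strongly convex on Q w.r.t. `np`
    (ρ : (Fin p → ℝ) → ℝ)
    (hρsc : ∀ u₁ ∈ Q, ∀ u₂ ∈ Q, ∀ t : ℝ, 0 ≤ t → t ≤ 1 →
      ρ (t • u₁ + (1 - t) • u₂) ≤ t * ρ u₁ + (1 - t) * ρ u₂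
        - (1 / 2) * (t * (1 - t)) * (np (u₁ - u₂)) ^ 2)
    (A : Matrix (Fin p) (Fin q) ℝ) (τ : ℝ) (hτ : 0 < τ)
    -- the operator norm ‖A‖_{#,†}
    (MA : ℝ)
    (hMA : IsGreatest {x : ℝ | ∃ u v, nq u = 1 ∧ np v = 1 ∧ x = ∑ i, A.mulVec u i * v i} MA)
    -- ŵ(z): the unique maximizer over Q of w ↦ ⟨Az, w⟩ − τ ρ(w)
    (w : (Fin q → ℝ) → (Fin p → ℝ))
    (hw : ∀ z, w z ∈ Q ∧ ∀ v ∈ Q, v ≠ w z →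
      (∑ i, A.mulVec z i * v i) - τ * ρ v < (∑ i, A.mulVec z i * w z i) - τ * ρ (w z))
    -- γ(z;τ)
    (γ : (Fin q → ℝ) → ℝ)
    (hγ : ∀ z, γ z = (∑ i, A.mulVec z i * w z i) - τ * ρ (w z)) :
    (∀ z, DifferentiableAt ℝ γ z ∧
      ∀ h : Fin q → ℝ, fderiv ℝ γ z h = ∑ j, (Aᵀ.mulVec (w z)) j * h j) ∧
    (∀ z₁ z₂, dq (Aᵀ.mulVec (w z₁) - Aᵀ.mulVec (w z₂)) ≤ MA ^ 2 / τ * nq (z₁ - z₂)) := by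
  let B : (Fin q → ℝ) →ₗ[ℝ] (Fin p → ℝ) →ₗ[ℝ] ℝ := (dotProductBilin ℝ ℝ).comp (toLin' A)
  let Np : Seminorm ℝ (Fin p → ℝ) := .of np hnp_add fun c x => by rw [hnp_smul, Real.norm_eq_abs]
  let Nq : Seminorm ℝ (Fin q → ℝ) := .of nq hnq_add fun c x => by rw [hnq_smul, Real.norm_eq_abs]
  have hunit : ∀ u v, Nq u = 1 → Np v = 1 → B u v ≤ MA := fun u v hu hv => hMA.2 ⟨u, v, hu, hv, rfl⟩
  have hMA₀ : 0 ≤ MA := by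
    obtain ⟨u, v, hu, hv, -⟩ := hMA.1
    exact B.nonneg_of_forall_seminorm_eq_one_le hu hv hunit
  have hB := B.le_mul_seminorm_mul_seminorm (fun x => (hnq_eq x).1) (fun y => (hnp_eq y).1) hunit
  have hsc : StrongConvexOnWrt Np τ Q (fun v => τ * ρ v) := by
    simpa using (show StrongConvexOnWrt Np 1 Q ρ from hρsc).const_mul hτ.le
  have hws : ∀ z, w z ∈ Q := fun z => (hw z).1
  have hmin : ∀ z, IsMinOn (fun v => τ * ρ v - B z v) Q (w z) := fun z =>
    isMinOn_iff.2 fun v hv => by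
    rcases eq_or_ne v (w z) with rfl | hne
    · exact le_rfl
    · have : B z v - τ * ρ v < B z (w z) - τ * ρ (w z) := (hw z).2 v hv hne
      linarith
  have hlip := hsc.argmin_sub_le hQconv hτ hMA₀ hB hws hmin
  refine ⟨fun z => ?_, fun z₁ z₂ => ?_⟩
  · have hd := hasFDerivAt_envelope hMA₀ (div_nonneg hMA₀ hτ.le) hB hws hmin hlip hγ z
    refine ⟨hd.differentiableAt, fun h => ?_⟩
    rw [hd.fderiv, LinearMap.coe_toContinuousLinearMap', LinearMap.flip_apply]
    exact (A.transpose_mulVec_dotProduct (w z) h).symm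
  · rw [hdq]
    refine Real.sSup_le ?_ (mul_nonneg (by positivity) (apply_nonneg Nq _))
    rintro _ ⟨u, hu, rfl⟩
    calc (Aᵀ *ᵥ w z₁ - Aᵀ *ᵥ w z₂) ⬝ᵥ u = B u (w z₁ - w z₂) := by
          rw [← mulVec_sub, transpose_mulVec_dotProduct]; rfl
      _ ≤ MA * Nq u * Np (w z₁ - w z₂) := hB _ _
      _ ≤ MA * 1 * (MA / τ * Nq (z₁ - z₂)) := by
          rw [show Nq u = 1 from hu]; exact mul_le_mul_of_nonneg_left (hlip z₁ z₂) (by simpa)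
      _ = MA ^ 2 / τ * Nq (z₁ - z₂) := by ring

/-- Nesterov smoothing: if `Q ⊆ ℝᵖ` is compact convex, `ρ` is continuous and
1-strongly convex on `Q` w.r.t. a norm `np` on `ℝᵖ`, `A` is a `p × q` matrix and `τ > 0`, then
`γ(z;τ) = max_{w ∈ Q} (⟨Az,w⟩ − τρ(w))` (attained at the unique maximizer `ŵ(z)`) is
differentiable with gradient `Aᵀ ŵ(z)`, and the gradient map is Lipschitz with constant
`‖A‖²_{#,†}/τ` (Lipschitz measured from the norm `nq` on `ℝ^q` to the dual norm of `nq`...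
here: dual norm `dq` of `nq` on the gradient side, as in the paper). -/
theorem stmt3 (p q : ℕ)
    -- a norm `np` on ℝᵖ and a norm `nq` on ℝ^q
    (np : (Fin p → ℝ) → ℝ)
    (hnp_add : ∀ x y, np (x + y) ≤ np x + np y)
    (hnp_smul : ∀ (c : ℝ) x, np (c • x) = |c| * np x)
    (hnp_eq : ∀ x, np x = 0 ↔ x = 0)
    (nq : (Fin q → ℝ) → ℝ)
    (hnq_add : ∀ x y, nq (x + y) ≤ nq x + nq y)
    (hnq_smul : ∀ (c : ℝ) x, nq (c • x) = |c| * nq x)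
    (hnq_eq : ∀ x, nq x = 0 ↔ x = 0)
    -- the dual norm of `nq`
    (dq : (Fin q → ℝ) → ℝ)
    (hdq : ∀ s, dq s = sSup ((fun u => ∑ i, s i * u i) '' {u | nq u = 1}))
    -- the set Q: compact and convex
    (Q : Set (Fin p → ℝ)) (hQne : Q.Nonempty) (hQcomp : IsCompact Q) (hQconv : Convex ℝ Q)
    -- the prox function: continuous, 1-strongly convex on Q w.r.t. `np`
    (ρ : (Fin p → ℝ) → ℝ) (hρcont : Continuous ρ)
    (hρsc : ∀ u₁ ∈ Q, ∀ u₂ ∈ Q, ∀ t : ℝ, 0 ≤ t → t ≤ 1 →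
      ρ (t • u₁ + (1 - t) • u₂) ≤ t * ρ u₁ + (1 - t) * ρ u₂
        - (1 / 2) * (t * (1 - t)) * (np (u₁ - u₂)) ^ 2)
    (A : Matrix (Fin p) (Fin q) ℝ) (τ : ℝ) (hτ : 0 < τ)
    -- the operator norm ‖A‖_{#,†}
    (MA : ℝ)
    (hMA : IsGreatest {x : ℝ | ∃ u v, nq u = 1 ∧ np v = 1 ∧ x = ∑ i, A.mulVec u i * v i} MA)
    -- ŵ(z): the unique maximizer over Q of w ↦ ⟨Az, w⟩ − τ ρ(w)
    (w : (Fin q → ℝ) → (Fin p → ℝ))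
    (hw : ∀ z, w z ∈ Q ∧ ∀ v ∈ Q, v ≠ w z →
      (∑ i, A.mulVec z i * v i) - τ * ρ v < (∑ i, A.mulVec z i * w z i) - τ * ρ (w z))
    -- γ(z;τ)
    (γ : (Fin q → ℝ) → ℝ)
    (hγ : ∀ z, γ z = (∑ i, A.mulVec z i * w z i) - τ * ρ (w z)) :
    (∀ z, DifferentiableAt ℝ γ z ∧
      ∀ h : Fin q → ℝ, fderiv ℝ γ z h = ∑ j, (Aᵀ.mulVec (w z)) j * h j) ∧
    (∀ z₁ z₂, dq (Aᵀ.mulVec (w z₁) - Aᵀ.mulVec (w z₂)) ≤ MA ^ 2 / τ * nq (z₁ - z₂)) :=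
  stmt3_general p q np hnp_add hnp_smul hnp_eq nq hnq_add hnq_smul hnq_eq dq hdq Q hQconv ρ hρsc A τ
    hτ MA hMA w hw γ hγ
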